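/- arXiv:1901.06527 — 2 statements merged into one kernel-verified Lean document; each statement's English description precedes it below -/
import Mathlib

section
/- There is an absolute constant C > 0 such that the following holds. Let n ∈ ℕ, s, r ∈ {1,…,n} with 2r ≤ 2s ≤ n, δ ∈ (0,1), and let 𝒜 : ℝ^{n×n} → ℝ^m be a linear map with 𝒜(M)_i = ⟨A_i, M⟩_F satisfying (1−δ)‖Z‖_F ≤ ‖𝒜(Z)‖₁ ≤ (1+δ)‖Z‖_F for all Z ∈ bilr(2s,2r). Let X ∈ b̃ilr(s,r), let y = sgn(𝒜X) ∈ {±1}^m, and let X' be any minimizer over Z ∈ bilr(s,r) of ‖𝒜*(y) − Z‖_F, where 𝒜*(v) = Σ_{i=1}^m v_i A_i. Then ‖X − X'‖_F ≤ C √δ. -/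
open MeasureTheory ProbabilityTheory

noncomputable section

/-- Frobenius inner product of two real matrices. -/
def frobInner {a b : ℕ} (X Y : Matrix (Fin a) (Fin b) ℝ) : ℝ :=
  ∑ i, ∑ j, X i j * Y i j

/-- Frobenius norm of a real matrix. -/
def frobNorm {a b : ℕ} (X : Matrix (Fin a) (Fin b) ℝ) : ℝ :=
  Real.sqrt (∑ i, ∑ j, (X i j) ^ 2)

/-- Sign function with values in {−1, 1}. -/
def sgn (x : ℝ) : ℝ := if x < 0 then -1 else 1

/-- The set of matrices of rank at most `r` supported on a set `S × T` with `|S| = |T| = s`. -/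
def bilr (n s r : ℕ) : Set (Matrix (Fin n) (Fin n) ℝ) :=
  {X | X.rank ≤ r ∧ ∃ S T : Finset (Fin n), S.card = s ∧ T.card = s ∧
      ∀ i j, X i j ≠ 0 → i ∈ S ∧ j ∈ T}

/-- The intersection of `bilr n s r` with the Frobenius unit sphere. -/
def bilrSphere (n s r : ℕ) : Set (Matrix (Fin n) (Fin n) ℝ) :=
  {X | X ∈ bilr n s r ∧ frobNorm X = 1}

/-! ### Auxiliary lemmas -/

section Aux

variable {a b : ℕ}

lemma frobInner_comm (X Y : Matrix (Fin a) (Fin b) ℝ) : frobInner X Y = frobInner Y X := by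
  simp [frobInner, mul_comm]

lemma frobInner_add_left (X Y Z : Matrix (Fin a) (Fin b) ℝ) :
    frobInner (X + Y) Z = frobInner X Z + frobInner Y Z := by
  simp [frobInner, Matrix.add_apply, add_mul, Finset.sum_add_distrib]

lemma frobInner_sub_left (X Y Z : Matrix (Fin a) (Fin b) ℝ) :
    frobInner (X - Y) Z = frobInner X Z - frobInner Y Z := by
  simp [frobInner, Matrix.sub_apply, sub_mul, Finset.sum_sub_distrib]

lemma frobInner_smul_left (c : ℝ) (X Z : Matrix (Fin a) (Fin b) ℝ) :
    frobInner (c • X) Z = c * frobInner X Z := by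
  simp [frobInner, Matrix.smul_apply, smul_eq_mul, Finset.mul_sum, mul_assoc]

lemma frobInner_sub_right (X Y Z : Matrix (Fin a) (Fin b) ℝ) :
    frobInner X (Y - Z) = frobInner X Y - frobInner X Z := by
  rw [frobInner_comm X (Y - Z), frobInner_sub_left, frobInner_comm Y X, frobInner_comm Z X]

lemma frobInner_smul_right (c : ℝ) (X Z : Matrix (Fin a) (Fin b) ℝ) :
    frobInner X (c • Z) = c * frobInner X Z := by
  rw [frobInner_comm X (c • Z), frobInner_smul_left, frobInner_comm Z X]

lemma frobInner_sum_left {ι : Type*} (t : Finset ι) (M : ι → Matrix (Fin a) (Fin b) ℝ)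
    (Z : Matrix (Fin a) (Fin b) ℝ) :
    frobInner (∑ k ∈ t, M k) Z = ∑ k ∈ t, frobInner (M k) Z := by
  classical
  induction t using Finset.induction_on with
  | empty => simp [frobInner]
  | @insert i t hi ih => rw [Finset.sum_insert hi, frobInner_add_left, ih, Finset.sum_insert hi]

lemma frobInner_self_nonneg (X : Matrix (Fin a) (Fin b) ℝ) : 0 ≤ frobInner X X :=
  Finset.sum_nonneg fun _ _ => Finset.sum_nonneg fun _ _ => mul_self_nonneg _

lemma frobNorm_eq (X : Matrix (Fin a) (Fin b) ℝ) : frobNorm X = Real.sqrt (frobInner X X) := by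
  simp [frobNorm, frobInner, sq]

lemma frobNorm_nonneg (X : Matrix (Fin a) (Fin b) ℝ) : 0 ≤ frobNorm X := Real.sqrt_nonneg _

lemma frobNorm_sq (X : Matrix (Fin a) (Fin b) ℝ) : frobNorm X ^ 2 = frobInner X X := by
  rw [frobNorm_eq, Real.sq_sqrt (frobInner_self_nonneg X)]

lemma abs_frobInner_le (X Y : Matrix (Fin a) (Fin b) ℝ) :
    |frobInner X Y| ≤ frobNorm X * frobNorm Y := by
  have h := Finset.sum_mul_sq_le_sq_mul_sq Finset.univ
    (fun p : Fin a × Fin b => X p.1 p.2) (fun p => Y p.1 p.2)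
  have e1 : ∑ p : Fin a × Fin b, X p.1 p.2 * Y p.1 p.2 = frobInner X Y := by
    rw [frobInner]; exact Fintype.sum_prod_type _
  have e2 : ∑ p : Fin a × Fin b, X p.1 p.2 ^ 2 = ∑ i, ∑ j, X i j ^ 2 :=
    Fintype.sum_prod_type _
  have e3 : ∑ p : Fin a × Fin b, Y p.1 p.2 ^ 2 = ∑ i, ∑ j, Y i j ^ 2 :=
    Fintype.sum_prod_type _
  rw [e1, e2, e3] at h
  have hX0 : (0:ℝ) ≤ ∑ i, ∑ j, X i j ^ 2 := by positivity
  calc |frobInner X Y| = Real.sqrt ((frobInner X Y) ^ 2) := (Real.sqrt_sq_eq_abs _).symm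
    _ ≤ Real.sqrt ((∑ i, ∑ j, X i j ^ 2) * (∑ i, ∑ j, Y i j ^ 2)) := Real.sqrt_le_sqrt h
    _ = frobNorm X * frobNorm Y := Real.sqrt_mul hX0 _

lemma sqrt_le_half_one_add (y : ℝ) (hy : 0 ≤ y) : Real.sqrt y ≤ (1 + y) / 2 := by
  nlinarith [Real.sq_sqrt hy, sq_nonneg (Real.sqrt y - 1)]

lemma sgn_mul_self (x : ℝ) : sgn x * x = |x| := by
  rcases lt_or_ge x 0 with h | h
  · rw [sgn, if_pos h, abs_of_neg h]; ring
  · rw [sgn, if_neg (not_lt.2 h), abs_of_nonneg h]; ring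

lemma sgn_mul_le (x y : ℝ) : sgn x * y ≤ |y| := by
  rcases lt_or_ge x 0 with h | h
  · rw [sgn, if_pos h]
    calc (-1 : ℝ) * y = -y := by ring
      _ ≤ |y| := neg_le_abs y
  · rw [sgn, if_neg (not_lt.2 h), one_mul]; exact le_abs_self y

lemma rank_smul_add_smul_le {n : ℕ} (c d : ℝ) (X Y : Matrix (Fin n) (Fin n) ℝ) :
    (c • X + d • Y).rank ≤ X.rank + Y.rank := by
  have hsub : LinearMap.range (c • X + d • Y).mulVecLin ≤
      LinearMap.range X.mulVecLin ⊔ LinearMap.range Y.mulVecLin := by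
    rintro v ⟨w, rfl⟩
    have he : (c • X + d • Y).mulVecLin w = c • X.mulVecLin w + d • Y.mulVecLin w := by
      simp [Matrix.mulVecLin_apply, Matrix.add_mulVec, Matrix.smul_mulVec]
    rw [he]
    exact Submodule.add_mem _
      (Submodule.mem_sup_left (Submodule.smul_mem _ c ⟨w, rfl⟩))
      (Submodule.mem_sup_right (Submodule.smul_mem _ d ⟨w, rfl⟩))
  calc (c • X + d • Y).rank
      ≤ Module.finrank ℝ ↥(LinearMap.range X.mulVecLin ⊔ LinearMap.range Y.mulVecLin) :=
        Submodule.finrank_mono hsub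
    _ ≤ X.rank + Y.rank := Submodule.finrank_add_le_finrank_add_finrank _ _

lemma combo_mem_bilr {n s r : ℕ} (hn : 2 * s ≤ n) {X Y : Matrix (Fin n) (Fin n) ℝ}
    (hX : X ∈ bilr n s r) (hY : Y ∈ bilr n s r) (c d : ℝ) :
    c • X + d • Y ∈ bilr n (2 * s) (2 * r) := by
  obtain ⟨hrX, S, T, hS, hT, hsupp⟩ := hX
  obtain ⟨hrY, S', T', hS', hT', hsupp'⟩ := hY
  refine ⟨(rank_smul_add_smul_le c d X Y).trans (by omega), ?_⟩
  have hcardS : (S ∪ S').card ≤ 2 * s :=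
    le_trans (Finset.card_union_le _ _) (by omega)
  have hcardT : (T ∪ T').card ≤ 2 * s :=
    le_trans (Finset.card_union_le _ _) (by omega)
  have hn' : 2 * s ≤ Fintype.card (Fin n) := by simpa using hn
  obtain ⟨S₂, hSsub, hS₂⟩ := Finset.exists_superset_card_eq hcardS hn'
  obtain ⟨T₂, hTsub, hT₂⟩ := Finset.exists_superset_card_eq hcardT hn'
  refine ⟨S₂, T₂, hS₂, hT₂, fun i j hij => ?_⟩
  by_cases hx : X i j = 0
  · by_cases hy : Y i j = 0
    · exact absurd (by simp [Matrix.add_apply, Matrix.smul_apply, hx, hy]) hij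
    · obtain ⟨h1, h2⟩ := hsupp' i j hy
      exact ⟨hSsub (Finset.mem_union_right _ h1), hTsub (Finset.mem_union_right _ h2)⟩
  · obtain ⟨h1, h2⟩ := hsupp i j hx
    exact ⟨hSsub (Finset.mem_union_left _ h1), hTsub (Finset.mem_union_left _ h2)⟩

end Aux

/-- Projected back projection: if the measurement map satisfies the ℓ₁ restricted isometry
property on `bilr(2s,2r)` with constant `δ`, then any `X ∈ b̃ilr(s,r)` is approximated by the
projection of `𝒜*(sgn(𝒜X))` onto `bilr(s,r)` with error at most `C√δ`. -/
theorem projected_back_projection_error :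
    ∃ C : ℝ, 0 < C ∧ ∀ (n s r m : ℕ), 1 ≤ r → r ≤ s → 2 * s ≤ n →
      ∀ δ : ℝ, 0 < δ → δ < 1 →
      ∀ A : Fin m → Matrix (Fin n) (Fin n) ℝ,
      (∀ Z ∈ bilr n (2 * s) (2 * r),
        (1 - δ) * frobNorm Z ≤ (∑ i, |frobInner (A i) Z|) ∧
        (∑ i, |frobInner (A i) Z|) ≤ (1 + δ) * frobNorm Z) →
      ∀ X ∈ bilrSphere n s r, ∀ X' ∈ bilr n s r,
      (∀ Z ∈ bilr n s r,
        frobNorm ((∑ i, sgn (frobInner (A i) X) • A i) - X') ≤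
          frobNorm ((∑ i, sgn (frobInner (A i) X) • A i) - Z)) →
      frobNorm (X - X') ≤ C * Real.sqrt δ := by
  refine ⟨8, by norm_num, ?_⟩
  intro n s r m hr hrs hsn δ hδ0 hδ1 A hRIP X hX X' hX' hmin
  obtain ⟨hXb, hXnorm⟩ := hX
  set H : Matrix (Fin n) (Fin n) ℝ := ∑ i, sgn (frobInner (A i) X) • A i with hHdef
  have hHinner : ∀ Z, frobInner H Z = ∑ i, sgn (frobInner (A i) X) * frobInner (A i) Z := by
    intro Z
    rw [hHdef, frobInner_sum_left]
    exact Finset.sum_congr rfl fun i _ => frobInner_smul_left _ _ _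
  have hX2 : X ∈ bilr n (2 * s) (2 * r) := by
    have h := combo_mem_bilr hsn hXb hXb 1 0
    simpa using h
  have hXX : frobInner X X = 1 := by
    rw [← frobNorm_sq, hXnorm]; norm_num
  -- ⟨H, X⟩ ≥ 1 - δ
  have hHX : 1 - δ ≤ frobInner H X := by
    have h := (hRIP X hX2).1
    rw [hXnorm, mul_one] at h
    calc 1 - δ ≤ ∑ i, |frobInner (A i) X| := h
      _ = frobInner H X := by
          rw [hHinner]
          exact Finset.sum_congr rfl fun i _ => (sgn_mul_self _).symm
  -- minimality consequence
  have h5 : 2 * (frobInner H X - frobInner H X') ≤ 1 - frobInner X' X' := by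
    have h := hmin X hXb
    have h2 : frobInner (H - X') (H - X') ≤ frobInner (H - X) (H - X) := by
      have h3 := pow_le_pow_left₀ (frobNorm_nonneg _) h 2
      rwa [frobNorm_sq, frobNorm_sq] at h3
    have e1 : frobInner (H - X') (H - X') =
        frobInner H H - 2 * frobInner H X' + frobInner X' X' := by
      rw [frobInner_sub_left, frobInner_sub_right, frobInner_sub_right, frobInner_comm X' H]
      ring
    have e2 : frobInner (H - X) (H - X) =
        frobInner H H - 2 * frobInner H X + frobInner X X := by
      rw [frobInner_sub_left, frobInner_sub_right, frobInner_sub_right, frobInner_comm X H]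
      ring
    rw [e1, e2, hXX] at h2
    linarith
  set D : Matrix (Fin n) (Fin n) ℝ := X - X' with hDdef
  by_cases hd0 : frobNorm D = 0
  · rw [hd0]; positivity
  have hd : 0 < frobNorm D := lt_of_le_of_ne (frobNorm_nonneg _) (Ne.symm hd0)
  set t : ℝ := Real.sqrt δ with htdef
  have ht0 : 0 < t := Real.sqrt_pos.2 hδ0
  have ht1 : t ≤ 1 := Real.sqrt_le_one.mpr hδ1.le
  have ht2 : t ^ 2 = δ := Real.sq_sqrt hδ0.le
  set c : ℝ := t / frobNorm D with hcdef
  have hc0 : 0 < c := div_pos ht0 hd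
  have hcd : c * frobNorm D = t := div_mul_cancel₀ _ (ne_of_gt hd)
  set W : Matrix (Fin n) (Fin n) ℝ := X - c • D with hWdef
  have hWmem : W ∈ bilr n (2 * s) (2 * r) := by
    have h := combo_mem_bilr hsn hXb hX' (1 - c) c
    have he : (1 - c) • X + c • X' = W := by
      rw [hWdef, hDdef]
      ext i j
      simp [Matrix.sub_apply, Matrix.add_apply, Matrix.smul_apply]
      ring
    rwa [he] at h
  have hDD : frobInner D D = frobNorm D ^ 2 := (frobNorm_sq D).symm
  have hc2 : c ^ 2 * frobInner D D = δ := by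
    rw [hDD, ← ht2]
    rw [show c ^ 2 * frobNorm D ^ 2 = (c * frobNorm D) ^ 2 by ring, hcd]
  have hWW : frobInner W W = 1 - 2 * c * frobInner X D + c ^ 2 * frobInner D D := by
    rw [hWdef, frobInner_sub_left, frobInner_sub_right, frobInner_sub_right,
      frobInner_smul_left, frobInner_smul_right, frobInner_smul_right, frobInner_smul_left,
      frobInner_comm D X, hXX]
    ring
  have hWnorm : frobNorm W ≤ 1 - c * frobInner X D + δ / 2 := by
    have h0 : 0 ≤ frobInner W W := frobInner_self_nonneg W
    have h1 := sqrt_le_half_one_add _ h0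
    rw [frobNorm_eq]
    rw [hWW, hc2] at h1 ⊢
    linarith
  have hHW : frobInner H W ≤ (1 + δ) * frobNorm W := by
    calc frobInner H W = ∑ i, sgn (frobInner (A i) X) * frobInner (A i) W := hHinner W
      _ ≤ ∑ i, |frobInner (A i) W| := Finset.sum_le_sum fun i _ => sgn_mul_le _ _
      _ ≤ (1 + δ) * frobNorm W := (hRIP W hWmem).2
  have hHW2 : frobInner H W = frobInner H X - c * frobInner H D := by
    rw [hWdef, frobInner_sub_right, frobInner_smul_right]
  have habsXD : |frobInner X D| ≤ frobNorm D := by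
    have h := abs_frobInner_le X D
    rwa [hXnorm, one_mul] at h
  -- lower bound on c * ⟨X, D⟩
  have hcXD : -t ≤ c * frobInner X D := by
    have h1 : -(frobNorm D) ≤ frobInner X D := (abs_le.1 habsXD).1
    nlinarith [mul_le_mul_of_nonneg_left h1 hc0.le]
  -- key estimate
  have key : c * (frobInner X D - frobInner H D) ≤ 4 * δ := by
    have h1 : 1 - δ - c * frobInner H D ≤ (1 + δ) * (1 - c * frobInner X D + δ / 2) := by
      calc 1 - δ - c * frobInner H D ≤ frobInner H X - c * frobInner H D := by linarith
        _ = frobInner H W := hHW2.symm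
        _ ≤ (1 + δ) * frobNorm W := hHW
        _ ≤ (1 + δ) * (1 - c * frobInner X D + δ / 2) :=
            mul_le_mul_of_nonneg_left hWnorm (by linarith)
    have h3 : δ * (-(c * frobInner X D)) ≤ δ * t :=
      mul_le_mul_of_nonneg_left (by linarith) hδ0.le
    nlinarith [mul_le_mul_of_nonneg_left ht1 hδ0.le, sq_nonneg δ]
  -- geometric consequence of minimality
  have h6 : frobInner D D / 2 ≤ frobInner X D - frobInner H D := by
    have e1 : frobInner X D = 1 - frobInner X X' := by
      rw [hDdef, frobInner_sub_right, hXX]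
    have e2 : frobInner D D = 1 - 2 * frobInner X X' + frobInner X' X' := by
      rw [hDdef, frobInner_sub_left, frobInner_sub_right, frobInner_sub_right,
        frobInner_comm X' X, hXX]
      ring
    have e3 : frobInner H D = frobInner H X - frobInner H X' := by
      rw [hDdef, frobInner_sub_right]
    linarith
  -- conclude
  have hfinal : t * frobNorm D ≤ 8 * δ := by
    have h7 := mul_le_mul_of_nonneg_left h6 hc0.le
    have h8 : c * (frobInner D D / 2) = t * frobNorm D / 2 := by
      rw [hDD]
      have : c * (frobNorm D ^ 2 / 2) = (c * frobNorm D) * frobNorm D / 2 := by ring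
      rw [this, hcd]
    linarith [le_trans h7 key, h8.symm.le, h8.le]
  have h9 : (8 : ℝ) * Real.sqrt δ = 8 * δ / Real.sqrt δ := by
    rw [mul_div_assoc, Real.div_sqrt]
  rw [h9, le_div_iff₀ (Real.sqrt_pos.2 hδ0)]
  rw [← htdef] at *
  nlinarith [hfinal, hd.le, ht0.le]

end
end

section
/- Let X ∈ bilr(s,r) ⊆ ℝ^{n×n}, let M ∈ ℝ^{n×n}, and let X' be any minimizer over Z ∈ bilr(s,r) of ‖M − Z‖_F. Let 𝒮 be any linear subspace of ℝ^{n×n} containing both X and X − X', and let P_𝒮 denote the orthogonal projection onto 𝒮 with respect to the Frobenius inner product. Then ‖X − X'‖_F ≤ 2 ‖X − P_𝒮(M)‖_F. -/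
open MeasureTheory ProbabilityTheory

noncomputable section

/-! The best approximation `X'` from `bilr` beats `X`, and since both lie in `𝒮` and `M - P M` is
orthogonal to `𝒮`, Pythagoras turns `‖M - X'‖ ≤ ‖M - X‖` into `‖P M - X'‖ ≤ ‖P M - X‖`. The
triangle inequality through `P M` then gives the factor `2`. -/

section Orthogonal

variable {E : Type*} [NormedAddCommGroup E] [InnerProductSpace ℝ E] {m p x y : E}

open scoped RealInnerProductSpace

theorem norm_sub_mul_self_eq_of_inner_eq_zero (h : ⟪m - p, p - x⟫ = 0) :
    ‖m - x‖ * ‖m - x‖ = ‖m - p‖ * ‖m - p‖ + ‖p - x‖ * ‖p - x‖ := by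
  simpa only [sub_add_sub_cancel] using norm_add_sq_eq_norm_sq_add_norm_sq_real h

theorem norm_sub_le_norm_sub_of_inner_eq_zero (hx : ⟪m - p, p - x⟫ = 0)
    (hy : ⟪m - p, p - y⟫ = 0) (h : ‖m - y‖ ≤ ‖m - x‖) : ‖p - y‖ ≤ ‖p - x‖ := by
  rw [mul_self_le_mul_self_iff (norm_nonneg _) (norm_nonneg _)]
  linarith [mul_self_le_mul_self (norm_nonneg _) h, norm_sub_mul_self_eq_of_inner_eq_zero hx,
    norm_sub_mul_self_eq_of_inner_eq_zero hy]

theorem norm_sub_le_two_mul_of_inner_eq_zero (hx : ⟪m - p, p - x⟫ = 0)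
    (hy : ⟪m - p, p - y⟫ = 0) (h : ‖m - y‖ ≤ ‖m - x‖) : ‖x - y‖ ≤ 2 * ‖x - p‖ :=
  calc ‖x - y‖ ≤ ‖x - p‖ + ‖p - y‖ := norm_sub_le_norm_sub_add_norm_sub _ _ _
    _ ≤ ‖x - p‖ + ‖p - x‖ := by gcongr; exact norm_sub_le_norm_sub_of_inner_eq_zero hx hy h
    _ = 2 * ‖x - p‖ := by rw [norm_sub_rev p x]; ring

end Orthogonal

section Frobenius

variable {a b : ℕ}

def frobVec (A : Matrix (Fin a) (Fin b) ℝ) : EuclideanSpace ℝ (Fin a × Fin b) :=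
  WithLp.toLp 2 fun ij => A ij.1 ij.2

theorem frobVec_sub (A B : Matrix (Fin a) (Fin b) ℝ) : frobVec (A - B) = frobVec A - frobVec B :=
  rfl

theorem frobNorm_eq_norm_frobVec (A : Matrix (Fin a) (Fin b) ℝ) : frobNorm A = ‖frobVec A‖ := by
  simp [EuclideanSpace.norm_eq, frobNorm, frobVec, Fintype.sum_prod_type]

theorem frobInner_eq_inner_frobVec (A B : Matrix (Fin a) (Fin b) ℝ) :
    frobInner A B = inner ℝ (frobVec A) (frobVec B) := by
  simp [PiLp.inner_apply, frobInner, frobVec, Fintype.sum_prod_type, mul_comm]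

end Frobenius

theorem best_approx_vs_projection_general (n s r : ℕ)
    (X : Matrix (Fin n) (Fin n) ℝ) (hX : X ∈ bilr n s r)
    (M X' : Matrix (Fin n) (Fin n) ℝ)
    (hmin : ∀ Z ∈ bilr n s r, frobNorm (M - X') ≤ frobNorm (M - Z))
    (𝒮 : Submodule ℝ (Matrix (Fin n) (Fin n) ℝ))
    (hX𝒮 : X ∈ 𝒮) (hXX'𝒮 : X - X' ∈ 𝒮)
    (P : Matrix (Fin n) (Fin n) ℝ → Matrix (Fin n) (Fin n) ℝ)
    (hPmem : ∀ W, P W ∈ 𝒮)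
    (hPorth : ∀ W, ∀ Y ∈ 𝒮, frobInner (W - P W) Y = 0) :
    frobNorm (X - X') ≤ 2 * frobNorm (X - P M) := by
  have hX'𝒮 : X' ∈ 𝒮 := by simpa using 𝒮.sub_mem hX𝒮 hXX'𝒮
  have horth : ∀ Y ∈ 𝒮, inner ℝ (frobVec M - frobVec (P M)) (frobVec (P M) - frobVec Y) = 0 := by
    intro Y hY
    rw [← frobVec_sub, ← frobVec_sub, ← frobInner_eq_inner_frobVec]
    exact hPorth M _ (𝒮.sub_mem (hPmem M) hY)
  simp only [frobNorm_eq_norm_frobVec, frobVec_sub] at hmin ⊢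
  exact norm_sub_le_two_mul_of_inner_eq_zero (horth X hX𝒮) (horth X' hX'𝒮) (hmin X hX)

/-- If `X ∈ bilr(s,r)`, `X'` is a best approximation to `M` from `bilr(s,r)`, and `𝒮` is a
subspace containing `X` and `X − X'`, with `P` the orthogonal projection onto `𝒮` for the
Frobenius inner product, then `‖X − X'‖_F ≤ 2 ‖X − P(M)‖_F`. -/
theorem best_approx_vs_projection (n s r : ℕ)
    (X : Matrix (Fin n) (Fin n) ℝ) (hX : X ∈ bilr n s r)
    (M X' : Matrix (Fin n) (Fin n) ℝ) (hX' : X' ∈ bilr n s r)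
    (hmin : ∀ Z ∈ bilr n s r, frobNorm (M - X') ≤ frobNorm (M - Z))
    (𝒮 : Submodule ℝ (Matrix (Fin n) (Fin n) ℝ))
    (hX𝒮 : X ∈ 𝒮) (hXX'𝒮 : X - X' ∈ 𝒮)
    (P : Matrix (Fin n) (Fin n) ℝ → Matrix (Fin n) (Fin n) ℝ)
    (hPmem : ∀ W, P W ∈ 𝒮)
    (hPorth : ∀ W, ∀ Y ∈ 𝒮, frobInner (W - P W) Y = 0) :
    frobNorm (X - X') ≤ 2 * frobNorm (X - P M) :=
  best_approx_vs_projection_general n s r X hX M X' hmin 𝒮 hX𝒮 hXX'𝒮 P hPmem hPorth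

end
end
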